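/- Let σ be a locally finite Borel measure on ℝ^n and 1 < s < ∞. For nonnegative reals {α_Q} indexed by dyadic cubes Q ⊆ Q_0 (finitely many nonzero), the quantity A_3 = ∫_{Q_0} sup_{x ∈ Q ⊆ Q_0} ((1/σ(Q)) ∑_{Q' ⊆ Q} α_{Q'})^s dσ(x) satisfies A_3 ≤ (s')^s A_1, where A_1 = ∫_{Q_0} (∑_{Q ⊆ Q_0} (α_Q/σ(Q)) 1_Q)^s dσ and s' = s/(s-1). -/

import Mathlib

open MeasureTheory Finset Classical

noncomputable section

def dyadicCube (n : ℕ) (i : ℤ) (k : Fin n → ℤ) : Set (Fin n → ℝ) :=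
  {x | ∀ j, (k j : ℝ) * 2 ^ (-i) ≤ x j ∧ x j < ((k j : ℝ) + 1) * 2 ^ (-i)}

def IsDyadicCube (n : ℕ) (Q : Set (Fin n → ℝ)) : Prop :=
  ∃ i k, Q = dyadicCube n i k

/-
For `t ≥ 0` the set where the supremum `F` exceeds `t` is the union of the cubes `Q` with
`σ(Q)⁻¹ ∑_{Q' ⊆ Q} α_{Q'} > t`. Dyadic cubes are nested or disjoint, so this union is the disjoint
union of its maximal cubes, and on each of them `t σ(Q) < ∑_{Q' ⊆ Q} α_{Q'} ≤ ∫_Q G` for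
`G = ∑ (α_Q / σ(Q)) 1_Q`. This weak-type bound `t σ{F > t} ≤ ∫_{F > t} G` is upgraded to the strong
bound as in Doob's inequality: the layer-cake formula and Tonelli give `∫ F^s ≤ s' ∫ G F^(s-1)`,
Hölder bounds the right side by `s' ‖G‖_s ‖F‖_s^(s-1)`, and since `∫ F^s < ∞` one divides by
`‖F‖_s^(s-1)`.
-/

open scoped ENNReal

theorem mem_dyadicCube_iff {n : ℕ} {i : ℤ} {k : Fin n → ℤ} {x : Fin n → ℝ} :
    x ∈ dyadicCube n i k ↔ ∀ j, ⌊x j * 2 ^ i⌋ = k j := by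
  have h2 : (0 : ℝ) < 2 ^ i := zpow_pos two_pos i
  simp only [dyadicCube, Set.mem_ofPred_eq, Int.floor_eq_iff, zpow_neg, mul_inv_le_iff₀ h2,
    lt_mul_inv_iff₀ h2]

theorem floor_mul_two_zpow_of_le (r : ℝ) {i i' : ℤ} (h : i' ≤ i) :
    ⌊r * 2 ^ i'⌋ = ⌊r * 2 ^ i⌋ / 2 ^ (i - i').toNat := by
  obtain ⟨d, rfl⟩ := Int.le.dest h
  have : r * 2 ^ i' = r * 2 ^ (i' + d) / ((2 ^ d : ℤ) : ℝ) := by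
    rw [zpow_add₀ two_ne_zero, zpow_natCast]; push_cast; field_simp
  rw [this, Int.floor_div_cast_of_nonneg (by positivity)]
  simp

theorem dyadicCube_subset_dyadicCube_div {n : ℕ} {i i' : ℤ} (h : i' ≤ i) (k : Fin n → ℤ) :
    dyadicCube n i k ⊆ dyadicCube n i' fun j => k j / 2 ^ (i - i').toNat := by
  intro x hx
  rw [mem_dyadicCube_iff] at hx ⊢
  intro j
  rw [floor_mul_two_zpow_of_le _ h, hx]

theorem eq_of_not_disjoint_dyadicCube {n : ℕ} {i : ℤ} {k k' : Fin n → ℤ}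
    (h : ¬Disjoint (dyadicCube n i k) (dyadicCube n i k')) : k = k' := by
  obtain ⟨x, hx, hx'⟩ := Set.not_disjoint_iff.mp h
  rw [mem_dyadicCube_iff] at hx hx'
  funext j
  rw [← hx, hx']

theorem dyadicCube_subset_of_le_of_not_disjoint {n : ℕ} {i i' : ℤ} {k k' : Fin n → ℤ}
    (h : i' ≤ i) (hd : ¬Disjoint (dyadicCube n i k) (dyadicCube n i' k')) :
    dyadicCube n i k ⊆ dyadicCube n i' k' := by
  have hsub := dyadicCube_subset_dyadicCube_div h k
  rwa [eq_of_not_disjoint_dyadicCube fun h' => hd (h'.mono_left hsub)] at hsub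

theorem IsDyadicCube.subset_or_subset_or_disjoint {n : ℕ} {A B : Set (Fin n → ℝ)}
    (hA : IsDyadicCube n A) (hB : IsDyadicCube n B) : A ⊆ B ∨ B ⊆ A ∨ Disjoint A B := by
  obtain ⟨i, k, rfl⟩ := hA
  obtain ⟨i', k', rfl⟩ := hB
  by_cases hd : Disjoint (dyadicCube n i k) (dyadicCube n i' k')
  · exact .inr (.inr hd)
  rcases le_total i' i with h | h
  · exact .inl (dyadicCube_subset_of_le_of_not_disjoint h hd)
  · exact .inr (.inl (dyadicCube_subset_of_le_of_not_disjoint h fun h' => hd h'.symm))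

theorem IsDyadicCube.measurableSet {n : ℕ} {A : Set (Fin n → ℝ)} (hA : IsDyadicCube n A) :
    MeasurableSet A := by
  obtain ⟨i, k, rfl⟩ := hA
  have : dyadicCube n i k = Set.univ.pi fun j =>
      Set.Ico ((k j : ℝ) * 2 ^ (-i)) (((k j : ℝ) + 1) * 2 ^ (-i)) := by
    ext x; simp [dyadicCube]
  rw [this]
  exact .univ_pi fun j => measurableSet_Ico

section NestedCover

variable {X : Type*}

theorem Finset.pairwiseDisjoint_filter_maximal {𝒞 : Finset (Set X)}
    (h𝒞 : ∀ A ∈ 𝒞, ∀ B ∈ 𝒞, A ⊆ B ∨ B ⊆ A ∨ Disjoint A B) :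
    (↑(𝒞.filter (Maximal (· ∈ 𝒞))) : Set (Set X)).PairwiseDisjoint id := by
  intro A hA B hB hne
  simp only [coe_filter, Set.mem_ofPred_eq] at hA hB
  rcases h𝒞 A hA.1 B hB.1 with h | h | h
  · exact absurd (hA.2.eq_of_le hB.1 h) hne
  · exact absurd (hB.2.eq_of_le hA.1 h).symm hne
  · exact h

theorem Finset.sUnion_filter_maximal (𝒞 : Finset (Set X)) :
    ⋃₀ (↑(𝒞.filter (Maximal (· ∈ 𝒞))) : Set (Set X)) = ⋃₀ ↑𝒞 := by
  refine (Set.sUnion_mono fun A hA => (mem_filter.1 hA).1).antisymm fun x hx => ?_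
  obtain ⟨A, hA, hxA⟩ := Set.mem_sUnion.1 hx
  obtain ⟨B, hAB, hB⟩ := 𝒞.exists_le_maximal hA
  exact Set.mem_sUnion.2 ⟨B, mem_filter.2 ⟨hB.1, hB⟩, hAB hxA⟩

theorem measure_sUnion_mul_le_setLIntegral_of_nested [MeasurableSpace X] {ν : Measure X}
    {g : X → ℝ≥0∞} {c : ℝ≥0∞} {𝒞 : Finset (Set X)} (hm : ∀ C ∈ 𝒞, MeasurableSet C)
    (h𝒞 : ∀ A ∈ 𝒞, ∀ B ∈ 𝒞, A ⊆ B ∨ B ⊆ A ∨ Disjoint A B)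
    (h : ∀ C ∈ 𝒞, ν C * c ≤ ∫⁻ x in C, g x ∂ν) :
    ν (⋃₀ ↑𝒞) * c ≤ ∫⁻ x in ⋃₀ ↑𝒞, g x ∂ν := by
  have hm' : ∀ C ∈ 𝒞.filter (Maximal (· ∈ 𝒞)), MeasurableSet C :=
    fun C hC => hm C (mem_filter.1 hC).1
  have hunion : ⋃₀ ↑𝒞 = ⋃ C ∈ 𝒞.filter (Maximal (· ∈ 𝒞)), id C := by
    rw [← 𝒞.sUnion_filter_maximal, Set.sUnion_eq_biUnion]
    rfl
  rw [hunion,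
    measure_biUnion_finset (Finset.pairwiseDisjoint_filter_maximal h𝒞) hm',
    lintegral_biUnion_finset (Finset.pairwiseDisjoint_filter_maximal h𝒞) hm', sum_mul]
  exact sum_le_sum fun C hC => h C (mem_filter.1 hC).1

end NestedCover

theorem lintegral_Ioo_rpow_sub_one {r b : ℝ} (hr : 0 < r) (hb : 0 ≤ b) :
    ∫⁻ t in Set.Ioo 0 b, ENNReal.ofReal (t ^ (r - 1)) = ENNReal.ofReal (b ^ r / r) := by
  have hint : IntegrableOn (fun t : ℝ => t ^ (r - 1)) (Set.Ioc 0 b) :=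
    (intervalIntegrable_iff_integrableOn_Ioc_of_le hb).mp
      (intervalIntegral.intervalIntegrable_rpow' (by linarith))
  rw [Measure.restrict_congr_set Ioo_ae_eq_Ioc, ← ofReal_integral_eq_lintegral_ofReal hint
    ((ae_restrict_iff' measurableSet_Ioc).2 (.of_forall fun t ht => Real.rpow_nonneg ht.1.le _)),
    ← intervalIntegral.integral_of_le hb, integral_rpow (.inl (by linarith)), sub_add_cancel,
    Real.zero_rpow hr.ne', sub_zero]

theorem ENNReal.le_rpow_mul_of_le_mul_rpow_mul_rpow {a b c : ℝ≥0∞} {p q : ℝ}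
    (hpq : p.HolderConjugate q) (ha : a ≠ ⊤) (h : a ≤ c * (b ^ (1 / p) * a ^ (1 / q))) :
    a ≤ c ^ p * b := by
  rcases eq_or_ne a 0 with rfl | ha0
  · exact zero_le
  have hq : 0 ≤ 1 / q := (one_div_pos.2 hpq.symm.pos).le
  have hap : a ^ (1 / p) ≤ c * b ^ (1 / p) := by
    rw [← ENNReal.mul_le_mul_iff_left (ENNReal.rpow_pos (pos_iff_ne_zero.2 ha0) ha).ne'
      (ENNReal.rpow_ne_top_of_nonneg hq ha), ← ENNReal.rpow_add _ _ ha0 ha,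
      hpq.one_div_add_one_div, one_div_one, ENNReal.rpow_one, mul_assoc]
    exact h
  calc a = (a ^ (1 / p)) ^ p := by
        rw [← ENNReal.rpow_mul, one_div_mul_cancel hpq.ne_zero, ENNReal.rpow_one]
    _ ≤ (c * b ^ (1 / p)) ^ p := by gcongr; exact hpq.nonneg
    _ = c ^ p * b := by
        rw [ENNReal.mul_rpow_of_nonneg _ _ hpq.nonneg, ← ENNReal.rpow_mul,
          one_div_mul_cancel hpq.ne_zero, ENNReal.rpow_one]

section WeakTypeToStrongType

variable {X : Type*} [MeasurableSpace X] {ν : Measure X}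

theorem lintegral_Ioi_setLIntegral_lt_mul [SFinite ν] {F : X → ℝ} {g : X → ℝ≥0∞}
    {w : ℝ → ℝ≥0∞} (hF : Measurable F) (hg : Measurable g) (hw : Measurable w) :
    ∫⁻ t in Set.Ioi (0 : ℝ), (∫⁻ x in {x | t < F x}, g x ∂ν) * w t =
      ∫⁻ x, g x * (∫⁻ t in Set.Ioo 0 (F x), w t) ∂ν := by
  have hmeas : Measurable fun p : ℝ × X => g p.2 * (Set.Iio (F p.2)).indicator w p.1 :=
    (hg.comp measurable_snd).mul <| (hw.comp measurable_fst).indicator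
      (measurableSet_lt measurable_fst (hF.comp measurable_snd))
  calc ∫⁻ t in Set.Ioi (0 : ℝ), (∫⁻ x in {x | t < F x}, g x ∂ν) * w t
      = ∫⁻ t in Set.Ioi (0 : ℝ), (∫⁻ x, g x * (Set.Iio (F x)).indicator w t ∂ν) := by
        refine lintegral_congr fun t => ?_
        rw [← lintegral_indicator (measurableSet_lt measurable_const hF),
          ← lintegral_mul_const _ (hg.indicator (measurableSet_lt measurable_const hF))]
        refine lintegral_congr fun x => ?_
        by_cases h : t < F x <;> simp [h, Set.indicator, mul_comm]
    _ = ∫⁻ x, (∫⁻ t in Set.Ioi (0 : ℝ), g x * (Set.Iio (F x)).indicator w t) ∂ν :=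
        lintegral_lintegral_swap hmeas.aemeasurable
    _ = ∫⁻ x, g x * (∫⁻ t in Set.Ioo 0 (F x), w t) ∂ν := by
        refine lintegral_congr fun x => ?_
        rw [lintegral_const_mul _ (hw.indicator measurableSet_Iio),
          lintegral_indicator measurableSet_Iio, Measure.restrict_restrict measurableSet_Iio,
          Set.Iio_inter_Ioi]

theorem lintegral_rpow_le_mul_lintegral_mul_rpow_sub_one [SFinite ν] {F : X → ℝ}
    {g : X → ℝ≥0∞} {s : ℝ} (hs : 1 < s) (hF0 : 0 ≤ F) (hF : Measurable F) (hg : Measurable g)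
    (hweak : ∀ t, 0 < t → ν {x | t < F x} * ENNReal.ofReal t ≤ ∫⁻ x in {x | t < F x}, g x ∂ν) :
    ∫⁻ x, ENNReal.ofReal (F x ^ s) ∂ν ≤
      ENNReal.ofReal (s / (s - 1)) * ∫⁻ x, g x * ENNReal.ofReal (F x ^ (s - 1)) ∂ν := by
  have hs1 : 0 < s - 1 := by linarith
  calc ∫⁻ x, ENNReal.ofReal (F x ^ s) ∂ν
      = ENNReal.ofReal s *
          ∫⁻ t in Set.Ioi (0 : ℝ), ν {x | t < F x} * ENNReal.ofReal (t ^ (s - 1)) :=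
        lintegral_rpow_eq_lintegral_meas_lt_mul ν (.of_forall hF0) hF.aemeasurable (by linarith)
    _ ≤ ENNReal.ofReal s * ∫⁻ t in Set.Ioi (0 : ℝ),
          (∫⁻ x in {x | t < F x}, g x ∂ν) * ENNReal.ofReal (t ^ (s - 1 - 1)) := by
        gcongr ENNReal.ofReal s * ?_
        refine setLIntegral_mono' measurableSet_Ioi fun t (ht : 0 < t) => ?_
        rw [← mul_div_cancel₀ (t ^ (s - 1)) ht.ne', ← Real.rpow_sub_one ht.ne',
          ENNReal.ofReal_mul ht.le, ← mul_assoc]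
        gcongr
        exact hweak t ht
    _ = ENNReal.ofReal s * ∫⁻ x, g x * ENNReal.ofReal (F x ^ (s - 1) / (s - 1)) ∂ν := by
        rw [lintegral_Ioi_setLIntegral_lt_mul hF hg (by fun_prop)]
        simp_rw [lintegral_Ioo_rpow_sub_one hs1 (hF0 _)]
    _ = ENNReal.ofReal (s / (s - 1)) * ∫⁻ x, g x * ENNReal.ofReal (F x ^ (s - 1)) ∂ν := by
        simp_rw [div_eq_mul_inv _ (s - 1), ENNReal.ofReal_mul' (inv_nonneg.2 hs1.le)]
        rw [mul_assoc]
        congr 1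
        rw [← lintegral_const_mul' _ _ ENNReal.ofReal_ne_top]
        exact lintegral_congr fun x => by ring

theorem lintegral_rpow_le_of_weak_type [SFinite ν] {F G : X → ℝ} {s : ℝ} (hs : 1 < s)
    (hF0 : 0 ≤ F) (hG0 : 0 ≤ G) (hF : Measurable F) (hG : Measurable G)
    (hfin : ∫⁻ x, ENNReal.ofReal (F x ^ s) ∂ν ≠ ⊤)
    (hweak : ∀ t, 0 < t →
      ν {x | t < F x} * ENNReal.ofReal t ≤ ∫⁻ x in {x | t < F x}, ENNReal.ofReal (G x) ∂ν) :
    ∫⁻ x, ENNReal.ofReal (F x ^ s) ∂ν ≤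
      ENNReal.ofReal ((s / (s - 1)) ^ s) * ∫⁻ x, ENNReal.ofReal (G x ^ s) ∂ν := by
  have hpq : s.HolderConjugate (s / (s - 1)) :=
    (Real.holderConjugate_iff_eq_conjExponent hs).2 rfl
  have hG_rpow : ∀ x, ENNReal.ofReal (G x) ^ s = ENNReal.ofReal (G x ^ s) := fun x =>
    ENNReal.ofReal_rpow_of_nonneg (hG0 x) hpq.nonneg
  have hF_rpow : ∀ x,
      ENNReal.ofReal (F x ^ (s - 1)) ^ (s / (s - 1)) = ENNReal.ofReal (F x ^ s) := fun x => by
    rw [ENNReal.ofReal_rpow_of_nonneg (Real.rpow_nonneg (hF0 x) _) hpq.symm.nonneg,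
      ← Real.rpow_mul (hF0 x), mul_div_cancel₀ _ hpq.sub_one_ne_zero]
  have hHolder := ENNReal.lintegral_mul_le_Lp_mul_Lq ν hpq
    (f := fun x => ENNReal.ofReal (G x)) (g := fun x => ENNReal.ofReal (F x ^ (s - 1)))
    (by fun_prop) (by fun_prop)
  simp only [hG_rpow, hF_rpow] at hHolder
  rw [← ENNReal.ofReal_rpow_of_nonneg hpq.symm.nonneg hpq.nonneg]
  refine ENNReal.le_rpow_mul_of_le_mul_rpow_mul_rpow hpq hfin ?_
  calc _ ≤ _ := lintegral_rpow_le_mul_lintegral_mul_rpow_sub_one hs hF0 hF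
          (ENNReal.measurable_ofReal.comp hG) hweak
    _ ≤ _ := by gcongr; exact hHolder

end WeakTypeToStrongType

theorem setIntegral_eq_setIntegral_of_subset_of_eq_zero {X : Type*} [MeasurableSpace X]
    {μ : Measure X} {f : X → ℝ} {U V : Set X} (hU : MeasurableSet U) (hUV : U ⊆ V)
    (hf : ∀ x ∉ U, f x = 0) : ∫ x in V, f x ∂μ = ∫ x in U, f x ∂μ := by
  conv_lhs => rw [← Set.indicator_eq_self.2 (Function.support_subset_iff'.2 hf)]
  rw [setIntegral_indicator hU, Set.inter_eq_right.2 hUV]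

theorem lintegral_ofReal_ne_top_of_le {X : Type*} [MeasurableSpace X] {μ : Measure X}
    [IsFiniteMeasure μ] {f : X → ℝ} {C : ℝ} (hf : ∀ x, f x ≤ C) :
    ∫⁻ x, ENNReal.ofReal (f x) ∂μ ≠ ⊤ :=
  ((lintegral_mono fun x => ENNReal.ofReal_le_ofReal (hf x)).trans_lt
    (lintegral_const_lt_top ENNReal.ofReal_ne_top)).ne

theorem integral_le_mul_integral_of_lintegral_ofReal_le {X : Type*} [MeasurableSpace X]
    {μ : Measure X} {f g : X → ℝ} {c : ℝ} (hc : 0 ≤ c) (hf0 : 0 ≤ f) (hg0 : 0 ≤ g)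
    (hf : AEStronglyMeasurable f μ) (hg : AEStronglyMeasurable g μ)
    (hg_fin : ∫⁻ x, ENNReal.ofReal (g x) ∂μ ≠ ⊤)
    (h : ∫⁻ x, ENNReal.ofReal (f x) ∂μ ≤ ENNReal.ofReal c * ∫⁻ x, ENNReal.ofReal (g x) ∂μ) :
    ∫ x, f x ∂μ ≤ c * ∫ x, g x ∂μ := by
  rw [integral_eq_lintegral_of_nonneg_ae (.of_forall hf0) hf,
    integral_eq_lintegral_of_nonneg_ae (.of_forall hg0) hg, ← ENNReal.toReal_ofReal hc,
    ← ENNReal.toReal_mul]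
  exact ENNReal.toReal_mono (ENNReal.mul_ne_top ENNReal.ofReal_ne_top hg_fin) h

section NestedFamily

variable {X ι : Type*} [MeasurableSpace X] [Fintype ι] {σ : Measure X} {Q : ι → Set X}
  {α : ι → ℝ}

-- The integrands of `A₃` and `A₁` are `maximalAverage σ Q α ^ s` and
-- `weightedIndicatorSum σ Q α ^ s`.
variable (σ Q α) in
def subfamilyAverage (i : ι) : ℝ :=
  1 / (σ (Q i)).toReal * ∑ j ∈ univ.filter fun j => Q j ⊆ Q i, α j

variable (σ Q α) in
def maximalAverage (x : X) : ℝ :=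
  ⨆ i, (Q i).indicator (fun _ => subfamilyAverage σ Q α i) x

variable (σ Q α) in
def weightedIndicatorSum (x : X) : ℝ :=
  ∑ i, α i / (σ (Q i)).toReal * (Q i).indicator 1 x

theorem subfamilyAverage_nonneg (hα : ∀ i, 0 ≤ α i) (i : ι) : 0 ≤ subfamilyAverage σ Q α i :=
  mul_nonneg (by positivity) (sum_nonneg fun j _ => hα j)

theorem lt_maximalAverage_iff {t : ℝ} (ht : 0 ≤ t) {x : X} :
    t < maximalAverage σ Q α x ↔ ∃ i, x ∈ Q i ∧ t < subfamilyAverage σ Q α i := by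
  constructor
  · intro h
    by_contra! hle
    exact h.not_ge (Real.iSup_le (fun i => Set.indicator_apply_le' (hle i) fun _ => ht) ht)
  · rintro ⟨i, hx, hi⟩
    refine hi.trans_le ?_
    simpa [hx, maximalAverage] using le_ciSup (Finite.bddAbove_range fun i =>
      (Q i).indicator (fun _ => subfamilyAverage σ Q α i) x) i

theorem maximalAverage_nonneg (hα : ∀ i, 0 ≤ α i) (x : X) : 0 ≤ maximalAverage σ Q α x :=
  Real.iSup_nonneg fun i => Set.indicator_nonneg (fun _ _ => subfamilyAverage_nonneg hα i) x

theorem maximalAverage_eq_zero_of_notMem (hα : ∀ i, 0 ≤ α i) {x : X} (hx : x ∉ ⋃ i, Q i) :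
    maximalAverage σ Q α x = 0 := by
  refine le_antisymm (not_lt.1 fun h => ?_) (maximalAverage_nonneg hα x)
  obtain ⟨i, hi, -⟩ := (lt_maximalAverage_iff le_rfl).1 h
  exact hx (Set.mem_iUnion_of_mem i hi)

theorem maximalAverage_le_sum (hα : ∀ i, 0 ≤ α i) (x : X) :
    maximalAverage σ Q α x ≤ ∑ i, subfamilyAverage σ Q α i := by
  have hsum : 0 ≤ ∑ i, subfamilyAverage σ Q α i :=
    sum_nonneg fun i _ => subfamilyAverage_nonneg hα i
  exact Real.iSup_le (fun i => Set.indicator_apply_le' (fun _ =>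
    single_le_sum (fun j _ => subfamilyAverage_nonneg hα j) (mem_univ i)) fun _ => hsum) hsum

theorem measurable_maximalAverage (hQm : ∀ i, MeasurableSet (Q i)) :
    Measurable (maximalAverage σ Q α) :=
  Measurable.iSup fun i => measurable_const.indicator (hQm i)

theorem setOf_lt_maximalAverage {t : ℝ} (ht : 0 ≤ t) :
    {x | t < maximalAverage σ Q α x} =
      ⋃₀ ↑((univ.filter fun i => t < subfamilyAverage σ Q α i).image Q) := by
  ext x
  simp [lt_maximalAverage_iff ht, and_comm]

theorem weightedIndicatorSum_nonneg (hα : ∀ i, 0 ≤ α i) (x : X) :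
    0 ≤ weightedIndicatorSum σ Q α x :=
  sum_nonneg fun i _ => mul_nonneg (div_nonneg (hα i) ENNReal.toReal_nonneg)
    (Set.indicator_nonneg (fun _ _ => zero_le_one) x)

theorem weightedIndicatorSum_eq_zero_of_notMem {x : X} (hx : x ∉ ⋃ i, Q i) :
    weightedIndicatorSum σ Q α x = 0 :=
  sum_eq_zero fun i _ => by
    simp [Set.indicator_of_notMem fun h => hx (Set.mem_iUnion_of_mem i h)]

theorem weightedIndicatorSum_le_sum (hα : ∀ i, 0 ≤ α i) (x : X) :
    weightedIndicatorSum σ Q α x ≤ ∑ i, α i / (σ (Q i)).toReal :=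
  sum_le_sum fun i _ => mul_le_of_le_one_right (div_nonneg (hα i) ENNReal.toReal_nonneg)
    (Set.indicator_apply_le' (fun _ => le_rfl) fun _ => zero_le_one)

theorem measurable_weightedIndicatorSum (hQm : ∀ i, MeasurableSet (Q i)) :
    Measurable (weightedIndicatorSum σ Q α) :=
  Finset.measurable_sum _ fun i _ => (measurable_const.indicator (hQm i)).const_mul _

theorem ofReal_weightedIndicatorSum (hα : ∀ i, 0 ≤ α i) (x : X) :
    ENNReal.ofReal (weightedIndicatorSum σ Q α x) =
      ∑ i, ENNReal.ofReal (α i / (σ (Q i)).toReal) * (Q i).indicator 1 x := by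
  rw [weightedIndicatorSum, ENNReal.ofReal_sum_of_nonneg (f := fun i =>
    α i / (σ (Q i)).toReal * (Q i).indicator 1 x) fun i _ =>
    mul_nonneg (div_nonneg (hα i) ENNReal.toReal_nonneg)
      (Set.indicator_nonneg (fun _ _ => zero_le_one) x)]
  refine sum_congr rfl fun i _ => ?_
  by_cases hx : x ∈ Q i <;> simp [hx]

theorem sum_subfamily_le_setLIntegral_weightedIndicatorSum (hQm : ∀ i, MeasurableSet (Q i))
    (hpos : ∀ i, 0 < (σ (Q i)).toReal) (hα : ∀ i, 0 ≤ α i) (i : ι) :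
    ENNReal.ofReal (∑ j ∈ univ.filter fun j => Q j ⊆ Q i, α j) ≤
      ∫⁻ x in Q i, ENNReal.ofReal (weightedIndicatorSum σ Q α x) ∂σ := by
  have hmass : ∀ j, Q j ⊆ Q i → ENNReal.ofReal (α j) =
      ∫⁻ x in Q i, ENNReal.ofReal (α j / (σ (Q j)).toReal) * (Q j).indicator 1 x ∂σ := by
    intro j hji
    obtain ⟨hσ0, hσtop⟩ := ENNReal.toReal_pos_iff.1 (hpos j)
    rw [lintegral_const_mul _ (measurable_one.indicator (hQm j)), lintegral_indicator_one (hQm j),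
      Measure.restrict_apply (hQm j), Set.inter_eq_left.2 hji, ENNReal.ofReal_div_of_pos (hpos j),
      ENNReal.ofReal_toReal hσtop.ne, ENNReal.div_mul_cancel hσ0.ne' hσtop.ne]
  calc ENNReal.ofReal (∑ j ∈ univ.filter fun j => Q j ⊆ Q i, α j)
      = ∑ j ∈ univ.filter fun j => Q j ⊆ Q i,
          ∫⁻ x in Q i, ENNReal.ofReal (α j / (σ (Q j)).toReal) * (Q j).indicator 1 x ∂σ := by
        rw [ENNReal.ofReal_sum_of_nonneg fun j _ => hα j]
        exact sum_congr rfl fun j hj => hmass j (mem_filter.1 hj).2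
    _ = ∫⁻ x in Q i, ∑ j ∈ univ.filter fun j => Q j ⊆ Q i,
          ENNReal.ofReal (α j / (σ (Q j)).toReal) * (Q j).indicator 1 x ∂σ :=
        (lintegral_finsetSum _ fun j _ => (measurable_one.indicator (hQm j)).const_mul _).symm
    _ ≤ ∫⁻ x in Q i, ENNReal.ofReal (weightedIndicatorSum σ Q α x) ∂σ := by
        simp_rw [ofReal_weightedIndicatorSum hα]
        exact lintegral_mono fun x => sum_le_sum_of_subset (filter_subset _ _)

theorem measure_mul_subfamilyAverage_le_setLIntegral (hQm : ∀ i, MeasurableSet (Q i))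
    (hpos : ∀ i, 0 < (σ (Q i)).toReal) (hα : ∀ i, 0 ≤ α i) (i : ι) :
    σ (Q i) * ENNReal.ofReal (subfamilyAverage σ Q α i) ≤
      ∫⁻ x in Q i, ENNReal.ofReal (weightedIndicatorSum σ Q α x) ∂σ := by
  rw [← ENNReal.ofReal_toReal (ENNReal.toReal_pos_iff.1 (hpos i)).2.ne,
    ← ENNReal.ofReal_mul ENNReal.toReal_nonneg, subfamilyAverage, ← mul_assoc,
    mul_one_div_cancel (hpos i).ne', one_mul]
  exact sum_subfamily_le_setLIntegral_weightedIndicatorSum hQm hpos hα i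

theorem measure_setOf_lt_maximalAverage_mul_le (hQm : ∀ i, MeasurableSet (Q i))
    (hnest : ∀ i j, Q i ⊆ Q j ∨ Q j ⊆ Q i ∨ Disjoint (Q i) (Q j))
    (hpos : ∀ i, 0 < (σ (Q i)).toReal) (hα : ∀ i, 0 ≤ α i) {t : ℝ} (ht : 0 ≤ t) :
    σ {x | t < maximalAverage σ Q α x} * ENNReal.ofReal t ≤
      ∫⁻ x in {x | t < maximalAverage σ Q α x},
        ENNReal.ofReal (weightedIndicatorSum σ Q α x) ∂σ := by
  rw [setOf_lt_maximalAverage ht]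
  refine measure_sUnion_mul_le_setLIntegral_of_nested ?_ ?_ ?_ <;> simp only [forall_mem_image]
  · exact fun i _ => hQm i
  · exact fun i _ j _ => hnest i j
  · intro i hi
    calc σ (Q i) * ENNReal.ofReal t ≤ σ (Q i) * ENNReal.ofReal (subfamilyAverage σ Q α i) := by
          gcongr; exact (mem_filter.1 hi).2.le
      _ ≤ _ := measure_mul_subfamilyAverage_le_setLIntegral hQm hpos hα i

theorem isFiniteMeasure_restrict_iUnion (hpos : ∀ i, 0 < (σ (Q i)).toReal) :
    IsFiniteMeasure (σ.restrict (⋃ i, Q i)) :=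
  isFiniteMeasure_restrict.2 ((measure_iUnion_fintype_le σ Q).trans_lt
    (ENNReal.sum_lt_top.2 fun i _ => (ENNReal.toReal_pos_iff.1 (hpos i)).2)).ne

-- Restricting `σ` to `⋃ i, Q i` makes it finite, so Tonelli applies although `σ` is arbitrary.
theorem lintegral_maximalAverage_rpow_le (hQm : ∀ i, MeasurableSet (Q i))
    (hnest : ∀ i j, Q i ⊆ Q j ∨ Q j ⊆ Q i ∨ Disjoint (Q i) (Q j))
    (hpos : ∀ i, 0 < (σ (Q i)).toReal) (hα : ∀ i, 0 ≤ α i) {s : ℝ} (hs : 1 < s) :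
    ∫⁻ x in ⋃ i, Q i, ENNReal.ofReal (maximalAverage σ Q α x ^ s) ∂σ ≤
      ENNReal.ofReal ((s / (s - 1)) ^ s) *
        ∫⁻ x in ⋃ i, Q i, ENNReal.ofReal (weightedIndicatorSum σ Q α x ^ s) ∂σ := by
  have := isFiniteMeasure_restrict_iUnion hpos
  refine lintegral_rpow_le_of_weak_type hs (maximalAverage_nonneg hα)
    (weightedIndicatorSum_nonneg hα) (measurable_maximalAverage hQm)
    (measurable_weightedIndicatorSum hQm) (lintegral_ofReal_ne_top_of_le fun x =>
      Real.rpow_le_rpow (maximalAverage_nonneg hα x) (maximalAverage_le_sum hα x)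
        (by linarith)) fun t ht => ?_
  have hsupp : {x | t < maximalAverage σ Q α x} ⊆ ⋃ i, Q i := fun x hx =>
    let ⟨i, hi, _⟩ := (lt_maximalAverage_iff ht.le).1 hx
    Set.mem_iUnion_of_mem i hi
  rw [Measure.restrict_eq_self _ hsupp, Measure.restrict_restrict_of_subset hsupp]
  exact measure_setOf_lt_maximalAverage_mul_le hQm hnest hpos hα ht.le

theorem setIntegral_maximalAverage_rpow_le (hQm : ∀ i, MeasurableSet (Q i))
    (hnest : ∀ i j, Q i ⊆ Q j ∨ Q j ⊆ Q i ∨ Disjoint (Q i) (Q j))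
    (hpos : ∀ i, 0 < (σ (Q i)).toReal) (hα : ∀ i, 0 ≤ α i) {s : ℝ} (hs : 1 < s) {V : Set X}
    (hV : ⋃ i, Q i ⊆ V) :
    ∫ x in V, maximalAverage σ Q α x ^ s ∂σ ≤
      (s / (s - 1)) ^ s * ∫ x in V, weightedIndicatorSum σ Q α x ^ s ∂σ := by
  have hs0 : 0 < s := by linarith
  have hU : MeasurableSet (⋃ i, Q i) := .iUnion hQm
  have := isFiniteMeasure_restrict_iUnion hpos
  rw [setIntegral_eq_setIntegral_of_subset_of_eq_zero hU hV fun x hx => by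
      rw [maximalAverage_eq_zero_of_notMem hα hx, Real.zero_rpow hs0.ne'],
    setIntegral_eq_setIntegral_of_subset_of_eq_zero hU hV fun x hx => by
      rw [weightedIndicatorSum_eq_zero_of_notMem hx, Real.zero_rpow hs0.ne']]
  exact integral_le_mul_integral_of_lintegral_ofReal_le (by positivity)
    (fun x => Real.rpow_nonneg (maximalAverage_nonneg hα x) s)
    (fun x => Real.rpow_nonneg (weightedIndicatorSum_nonneg hα x) s)
    ((measurable_maximalAverage hQm).pow_const s).aestronglyMeasurable
    ((measurable_weightedIndicatorSum hQm).pow_const s).aestronglyMeasurable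
    (lintegral_ofReal_ne_top_of_le fun x => Real.rpow_le_rpow (weightedIndicatorSum_nonneg hα x)
      (weightedIndicatorSum_le_sum hα x) hs0.le)
    (lintegral_maximalAverage_rpow_le hQm hnest hpos hα hs)

end NestedFamily

theorem wolff_lemma_A3_le_A1_general (n : ℕ) (σ : Measure (Fin n → ℝ))
    (s : ℝ) (hs1 : 1 < s) {ι : Type*} [Fintype ι]
    (Q : ι → Set (Fin n → ℝ)) (Q₀ : Set (Fin n → ℝ))
    (hQ : ∀ i, IsDyadicCube n (Q i))
    (hsub : ∀ i, Q i ⊆ Q₀) (hpos : ∀ i, 0 < (σ (Q i)).toReal)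
    (α : ι → ℝ) (hα : ∀ i, 0 ≤ α i) :
    ∫ x in Q₀, (⨆ i, (Q i).indicator
        (fun _ => (1 / (σ (Q i)).toReal) *
          ∑ j ∈ Finset.univ.filter fun j => Q j ⊆ Q i, α j) x) ^ s ∂σ ≤
      (s / (s - 1)) ^ s *
        ∫ x in Q₀, (∑ i, α i / (σ (Q i)).toReal * (Q i).indicator 1 x) ^ s ∂σ :=
  setIntegral_maximalAverage_rpow_le (fun i => (hQ i).measurableSet)
    (fun i j => (hQ i).subset_or_subset_or_disjoint (hQ j)) hpos hα hs1 (Set.iUnion_subset hsub)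

theorem wolff_lemma_A3_le_A1 (n : ℕ) (σ : Measure (Fin n → ℝ))
    [IsLocallyFiniteMeasure σ] (s : ℝ) (hs1 : 1 < s) {ι : Type*} [Fintype ι]
    (Q : ι → Set (Fin n → ℝ)) (Q₀ : Set (Fin n → ℝ))
    (hQ₀ : IsDyadicCube n Q₀) (hQ : ∀ i, IsDyadicCube n (Q i))
    (hsub : ∀ i, Q i ⊆ Q₀) (hpos : ∀ i, 0 < (σ (Q i)).toReal)
    (α : ι → ℝ) (hα : ∀ i, 0 ≤ α i) :
    ∫ x in Q₀, (⨆ i, (Q i).indicator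
        (fun _ => (1 / (σ (Q i)).toReal) *
          ∑ j ∈ Finset.univ.filter fun j => Q j ⊆ Q i, α j) x) ^ s ∂σ ≤
      (s / (s - 1)) ^ s *
        ∫ x in Q₀, (∑ i, α i / (σ (Q i)).toReal * (Q i).indicator 1 x) ^ s ∂σ :=
  wolff_lemma_A3_le_A1_general n σ s hs1 Q Q₀ hQ hsub hpos α hα
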